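/- A measurable set G ⊆ ℝ is a 2-dilation generator of a partition of ℝ (i.e., the sets 2ⁿG, n ∈ ℤ, are disjoint with union conull in ℝ) if and only if, modulo a null set, G is dilation congruent modulo 2 to [−2π,−π) ∪ [π,2π). -/

import Mathlib

/-
Every `s ≠ 0` has exactly one dilate `2ⁿ s` in `D = [-2π,-π) ∪ [π,2π)`, and `n` is an explicit
floor or ceiling of a base-2 logarithm, so `ρ(s) = 2ⁿ s` is a measurable map onto `D` whose fibres
over `ℝ \ {0}` are the dilation orbits. A dilation congruence `G → D` is necessarily `ρ`, so `G` is
congruent to `D` exactly when `ρ` is a bijection `G → D`, i.e. when `G` meets every orbit once; such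
a `G` tiles `ℝ \ {0}` exactly. Conversely, removing from a generator `G` the null set of points
whose orbit meets `G` again, and adding the null set of points of `D` whose orbit misses `G`, yields
such a transversal. Dilations preserve null sets, so both properties survive null modifications.
-/

open MeasureTheory Set Real
/-- `G` and `H` are dilation congruent modulo `2`: there is a measurable bijection
`τ : G → H` with `τ(s) = 2ⁿ s` (`n ∈ ℤ` depending on `s`) for every `s ∈ G`. -/
def DilationCongruent (G H : Set ℝ) : Prop :=
  ∃ τ : ℝ → ℝ, Measurable τ ∧ Set.BijOn τ G H ∧ ∀ s ∈ G, ∃ n : ℤ, τ s = (2 : ℝ) ^ n * s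

lemma two_zpow_mul_two_zpow_mul (m n : ℤ) (s : ℝ) :
    (2 : ℝ) ^ m * (2 ^ n * s) = 2 ^ (m + n) * s := by
  rw [← mul_assoc, ← zpow_add₀ two_ne_zero]

open scoped Pointwise in
lemma MeasurableSet.image_mul_left {A : Set ℝ} (hA : MeasurableSet A) (c : ℝ) :
    MeasurableSet ((fun s => c * s) '' A) :=
  hA.const_smul₀ c

open scoped Pointwise in
lemma volume_image_mul_left_eq_zero {A : Set ℝ} (h : volume A = 0) (c : ℝ) :
    volume ((fun s => c * s) '' A) = 0 := by
  change volume (c • A) = 0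
  rw [Measure.addHaar_smul, h, mul_zero]

lemma image_mul_left_ae_eq {A B : Set ℝ} (h : A =ᵐ[volume] B) {c : ℝ} (hc : c ≠ 0) :
    (fun s => c * s) '' A =ᵐ[volume] (fun s => c * s) '' B := by
  rw [← measure_symmDiff_eq_zero_iff, ← image_symmDiff (mul_right_injective₀ hc)]
  exact volume_image_mul_left_eq_zero (measure_symmDiff_eq_zero_iff.2 h) c

def IsDilationGenerator (G : Set ℝ) : Prop :=
  (∀ m n : ℤ, m ≠ n →
      AEDisjoint volume ((fun s => (2 : ℝ) ^ m * s) '' G) ((fun s => (2 : ℝ) ^ n * s) '' G)) ∧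
    volume (⋃ n : ℤ, (fun s => (2 : ℝ) ^ n * s) '' G)ᶜ = 0

lemma IsDilationGenerator.congr {G G' : Set ℝ} (hG : IsDilationGenerator G)
    (h : G =ᵐ[volume] G') : IsDilationGenerator G' := by
  have himage (n : ℤ) := image_mul_left_ae_eq h (zpow_ne_zero n (two_ne_zero (α := ℝ)))
  refine ⟨fun m n hmn => (hG.1 m n hmn).congr (himage m).symm (himage n).symm, ?_⟩
  rw [← hG.2]
  exact measure_congr (Filter.EventuallyEq.countable_iUnion himage).compl.symm

lemma two_zpow_mul_mem_Ico_iff {a s : ℝ} (ha : 0 < a) (hs : 0 < s) (n : ℤ) :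
    2 ^ n * s ∈ Ico a (2 * a) ↔ n = ⌈logb 2 (a / s)⌉ := by
  have hclog : ⌈logb 2 (a / s)⌉ = Int.clog 2 (a / s) := by
    exact_mod_cast Real.ceil_logb_natCast (b := 2) (div_pos ha hs).le
  have hle := Int.le_zpow_iff_clog_le (b := 2) one_lt_two (x := n) (div_pos ha hs)
  have hlt := Int.zpow_lt_iff_lt_clog (b := 2) one_lt_two (x := n - 1) (div_pos ha hs)
  push_cast at hle hlt
  rw [div_le_iff₀ hs] at hle
  rw [lt_div_iff₀ hs, zpow_sub_one₀ two_ne_zero] at hlt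
  have hn : n = Int.clog 2 (a / s) ↔ Int.clog 2 (a / s) ≤ n ∧ n - 1 < Int.clog 2 (a / s) := by
    omega
  rw [hclog, hn, ← hle, ← hlt, mem_Ico]
  constructor <;> rintro ⟨h₁, h₂⟩ <;> constructor <;> linarith

lemma two_zpow_mul_mem_Ioc_iff {a s : ℝ} (ha : 0 < a) (hs : 0 < s) (n : ℤ) :
    2 ^ n * s ∈ Ioc a (2 * a) ↔ n = ⌊logb 2 (2 * a / s)⌋ := by
  have hpos : 0 < 2 * a / s := by positivity
  have hlog : ⌊logb 2 (2 * a / s)⌋ = Int.log 2 (2 * a / s) := by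
    exact_mod_cast Real.floor_logb_natCast (b := 2) hpos.le
  have hle := Int.zpow_le_iff_le_log (b := 2) one_lt_two (x := n) hpos
  have hlt := Int.lt_zpow_iff_log_lt (b := 2) one_lt_two (x := n + 1) hpos
  push_cast at hle hlt
  rw [le_div_iff₀ hs] at hle
  rw [div_lt_iff₀ hs, zpow_add_one₀ two_ne_zero] at hlt
  have hn : n = Int.log 2 (2 * a / s) ↔
      n ≤ Int.log 2 (2 * a / s) ∧ Int.log 2 (2 * a / s) < n + 1 := by
    omega
  rw [hlog, hn, ← hle, ← hlt, mem_Ioc]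
  constructor <;> rintro ⟨h₁, h₂⟩ <;> constructor <;> linarith

def dyadicShell (a : ℝ) : Set ℝ := Ico (-(2 * a)) (-a) ∪ Ico a (2 * a)

noncomputable def dilationExponent (a s : ℝ) : ℤ :=
  if s < 0 then ⌊logb 2 (2 * a / -s)⌋ else ⌈logb 2 (a / s)⌉

noncomputable def dilationRep (a s : ℝ) : ℝ := 2 ^ dilationExponent a s * s

section DyadicShell

variable {a : ℝ}

lemma measurable_dilationRep (a : ℝ) : Measurable (dilationRep a) := by
  have hexp : Measurable (dilationExponent a) :=
    Measurable.ite measurableSet_Iio (by unfold logb; fun_prop) (by unfold logb; fun_prop)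
  exact (measurable_from_top.comp hexp).mul measurable_id

lemma zero_notMem_dyadicShell (ha : 0 < a) : (0 : ℝ) ∉ dyadicShell a := by
  simp only [dyadicShell, mem_union, mem_Ico, not_or]
  constructor <;> intro h <;> linarith [h.1, h.2]

lemma two_zpow_mul_mem_dyadicShell_iff (ha : 0 < a) {s : ℝ} (hs : s ≠ 0) (n : ℤ) :
    2 ^ n * s ∈ dyadicShell a ↔ n = dilationExponent a s := by
  have h2n : (0 : ℝ) < 2 ^ n := zpow_pos two_pos n
  rcases hs.lt_or_gt with hs | hs
  · rw [dilationExponent, if_pos hs, ← two_zpow_mul_mem_Ioc_iff ha (neg_pos.2 hs)]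
    have : 2 ^ n * s < 0 := mul_neg_of_pos_of_neg h2n hs
    simp only [dyadicShell, mem_union, mem_Ico, mem_Ioc]
    constructor
    · rintro (⟨h₁, h₂⟩ | ⟨h₁, h₂⟩) <;> constructor <;> linarith
    · rintro ⟨h₁, h₂⟩; left; constructor <;> linarith
  · rw [dilationExponent, if_neg hs.not_gt, ← two_zpow_mul_mem_Ico_iff ha hs]
    have : 0 < 2 ^ n * s := mul_pos h2n hs
    simp only [dyadicShell, mem_union, mem_Ico]
    constructor
    · rintro (⟨h₁, h₂⟩ | h) <;> [exact absurd h₂ (by linarith); exact h]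
    · exact Or.inr

lemma dilationRep_mem (ha : 0 < a) {s : ℝ} (hs : s ≠ 0) : dilationRep a s ∈ dyadicShell a :=
  (two_zpow_mul_mem_dyadicShell_iff ha hs _).2 rfl

lemma ne_zero_of_two_zpow_mul_mem (ha : 0 < a) {n : ℤ} {s : ℝ}
    (h : 2 ^ n * s ∈ dyadicShell a) : s ≠ 0 :=
  right_ne_zero_of_mul (ne_of_mem_of_not_mem h (zero_notMem_dyadicShell ha))

lemma two_zpow_mul_eq_dilationRep (ha : 0 < a) {n : ℤ} {s : ℝ}
    (h : 2 ^ n * s ∈ dyadicShell a) : 2 ^ n * s = dilationRep a s := by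
  rw [dilationRep, ← (two_zpow_mul_mem_dyadicShell_iff ha (ne_zero_of_two_zpow_mul_mem ha h) n).1 h]

lemma dilationRep_of_mem (ha : 0 < a) {d : ℝ} (hd : d ∈ dyadicShell a) : dilationRep a d = d := by
  simpa using (two_zpow_mul_eq_dilationRep ha (n := 0) (by simpa using hd)).symm

lemma dilationRep_two_zpow_mul (ha : 0 < a) {s : ℝ} (hs : s ≠ 0) (k : ℤ) :
    dilationRep a (2 ^ k * s) = dilationRep a s := by
  have hmem := dilationRep_mem ha (mul_ne_zero (zpow_ne_zero k two_ne_zero) hs)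
  rw [dilationRep, two_zpow_mul_two_zpow_mul] at hmem ⊢
  exact two_zpow_mul_eq_dilationRep ha hmem

lemma dilationRep_eq_dilationRep_iff (ha : 0 < a) {s d : ℝ} (hd : d ≠ 0) :
    dilationRep a s = dilationRep a d ↔ ∃ k : ℤ, 2 ^ k * s = d := by
  constructor
  · intro h
    refine ⟨-dilationExponent a d + dilationExponent a s, ?_⟩
    rw [← two_zpow_mul_two_zpow_mul]
    change 2 ^ _ * dilationRep a s = d
    rw [h, dilationRep, two_zpow_mul_two_zpow_mul, neg_add_cancel, zpow_zero, one_mul]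
  · rintro ⟨k, rfl⟩
    exact (dilationRep_two_zpow_mul ha (right_ne_zero_of_mul hd) k).symm

lemma mem_iUnion_image_two_zpow_mul_iff (ha : 0 < a) {A : Set ℝ} {d : ℝ} (hd : d ≠ 0) :
    d ∈ ⋃ k : ℤ, (fun s => (2 : ℝ) ^ k * s) '' A ↔ ∃ s ∈ A, dilationRep a s = dilationRep a d := by
  simp only [mem_iUnion, mem_image, dilationRep_eq_dilationRep_iff ha hd]
  tauto

lemma dilationCongruent_dyadicShell_iff (ha : 0 < a) {G : Set ℝ} :
    DilationCongruent G (dyadicShell a) ↔ BijOn (dilationRep a) G (dyadicShell a) := by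
  constructor
  · rintro ⟨τ, -, hbij, hτ⟩
    refine hbij.congr fun s hs => ?_
    obtain ⟨n, hn⟩ := hτ s hs
    rw [hn]
    exact two_zpow_mul_eq_dilationRep ha (hn ▸ hbij.mapsTo hs)
  · exact fun h => ⟨dilationRep a, measurable_dilationRep a, h, fun s _ => ⟨_, rfl⟩⟩

lemma isDilationGenerator_of_bijOn (ha : 0 < a) {G : Set ℝ}
    (h : BijOn (dilationRep a) G (dyadicShell a)) : IsDilationGenerator G := by
  have hG0 (s : ℝ) (hs : s ∈ G) : s ≠ 0 := ne_zero_of_two_zpow_mul_mem ha (h.mapsTo hs)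
  constructor
  · intro m n hmn
    refine Disjoint.aedisjoint (disjoint_left.2 ?_)
    rintro _ ⟨s, hs, rfl⟩ ⟨t, ht, hts : (2 : ℝ) ^ n * t = 2 ^ m * s⟩
    have hrep : dilationRep a t = dilationRep a s := by
      rw [← dilationRep_two_zpow_mul ha (hG0 t ht) n, hts, dilationRep_two_zpow_mul ha (hG0 s hs)]
    obtain rfl := h.injOn ht hs hrep
    exact hmn (zpow_right_injective₀ two_pos (by norm_num) (mul_right_cancel₀ (hG0 t ht) hts)).symm
  · refine measure_mono_null (fun x hx => ?_) (measure_singleton 0)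
    by_contra hx0
    obtain ⟨s, hs, hsx⟩ := h.surjOn (dilationRep_mem ha hx0)
    exact hx ((mem_iUnion_image_two_zpow_mul_iff ha hx0).2 ⟨s, hs, hsx⟩)

lemma injOn_dilationRep_diff (ha : 0 < a) (G : Set ℝ) :
    InjOn (dilationRep a) (G \ insert 0 (⋃ k ≠ (0 : ℤ), (fun s => (2 : ℝ) ^ k * s) '' G)) := by
  rintro s ⟨hs, -⟩ t ⟨-, ht⟩ hst
  obtain ⟨ht0, htG⟩ : t ≠ 0 ∧ t ∉ ⋃ k ≠ (0 : ℤ), (fun s => (2 : ℝ) ^ k * s) '' G := by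
    simpa only [mem_insert_iff, not_or] using ht
  obtain ⟨k, rfl⟩ := (dilationRep_eq_dilationRep_iff ha ht0).1 hst
  obtain rfl : k = 0 := by
    by_contra hk
    exact htG (mem_biUnion hk (mem_image_of_mem _ hs))
  simp

lemma bijOn_dilationRep_union_diff (ha : 0 < a) {G : Set ℝ} (h0 : (0 : ℝ) ∉ G)
    (hinj : InjOn (dilationRep a) G) :
    BijOn (dilationRep a) (G ∪ (dyadicShell a \ ⋃ k : ℤ, (fun s => (2 : ℝ) ^ k * s) '' G))
      (dyadicShell a) := by
  have hcover (d : ℝ) (hd : d ∈ dyadicShell a) :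
      d ∈ ⋃ k : ℤ, (fun s => (2 : ℝ) ^ k * s) '' G ↔ ∃ s ∈ G, dilationRep a s = d := by
    rw [mem_iUnion_image_two_zpow_mul_iff ha (ne_of_mem_of_not_mem hd (zero_notMem_dyadicShell ha)),
      dilationRep_of_mem ha hd]
  refine ⟨?_, ?_, fun d hd => ?_⟩
  · rintro s (hs | ⟨hs, -⟩)
    exacts [dilationRep_mem ha (ne_of_mem_of_not_mem hs h0), (dilationRep_of_mem ha hs).symm ▸ hs]
  · rintro s (hs | ⟨hs, hsG⟩) t (ht | ⟨ht, htG⟩) hst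
    · exact hinj hs ht hst
    · exact absurd ((hcover t ht).2 ⟨s, hs, hst.trans (dilationRep_of_mem ha ht)⟩) htG
    · exact absurd ((hcover s hs).2 ⟨t, ht, hst.symm.trans (dilationRep_of_mem ha hs)⟩) hsG
    · rwa [dilationRep_of_mem ha hs, dilationRep_of_mem ha ht] at hst
  · by_cases hdG : d ∈ ⋃ k : ℤ, (fun s => (2 : ℝ) ^ k * s) '' G
    · obtain ⟨s, hs, hsd⟩ := (hcover d hd).1 hdG
      exact ⟨s, Or.inl hs, hsd⟩
    · exact ⟨d, Or.inr ⟨hd, hdG⟩, dilationRep_of_mem ha hd⟩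

lemma IsDilationGenerator.exists_bijOn_ae_eq (ha : 0 < a) {G : Set ℝ}
    (hGm : MeasurableSet G) (hG : IsDilationGenerator G) :
    ∃ G' : Set ℝ, MeasurableSet G' ∧ G =ᵐ[volume] G' ∧
      BijOn (dilationRep a) G' (dyadicShell a) := by
  set N := insert 0 (⋃ k ≠ (0 : ℤ), (fun s => (2 : ℝ) ^ k * s) '' G)
  set G₀ := G \ N
  set M := dyadicShell a \ ⋃ k : ℤ, (fun s => (2 : ℝ) ^ k * s) '' G₀
  have hG₀m : MeasurableSet G₀ :=
    hGm.diff ((MeasurableSet.biUnion (to_countable _) fun k _ => hGm.image_mul_left _).insert 0)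
  have hGN : volume (G ∩ N) = 0 := by
    refine measure_mono_null (t := {0} ∪ ⋃ k ≠ (0 : ℤ), G ∩ (fun s => (2 : ℝ) ^ k * s) '' G)
      (by intro x; simp +contextual [N]) (measure_union_null (measure_singleton 0) ?_)
    refine (measure_biUnion_null_iff (to_countable _)).2 fun k hk => ?_
    simpa [AEDisjoint] using hG.1 0 k (Ne.symm hk)
  have hGG₀ : G =ᵐ[volume] G₀ := (sdiff_ae_eq_self.2 hGN).symm
  have hM : volume M = 0 := measure_mono_null (fun x hx => hx.2) (hG.congr hGG₀).2
  have hMm : MeasurableSet M := (measurableSet_Ico.union measurableSet_Ico).diff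
    (.iUnion fun k => hG₀m.image_mul_left _)
  exact ⟨G₀ ∪ M, hG₀m.union hMm,
    hGG₀.trans (union_ae_eq_left_of_ae_eq_empty (ae_eq_empty.2 hM)).symm,
    bijOn_dilationRep_union_diff ha (fun h => h.2 (mem_insert 0 _)) (injOn_dilationRep_diff ha G)⟩

end DyadicShell

theorem stmt_12 (G : Set ℝ) (hG : MeasurableSet G) :
    ((∀ m n : ℤ, m ≠ n →
        AEDisjoint volume ((fun s => (2 : ℝ) ^ m * s) '' G) ((fun s => (2 : ℝ) ^ n * s) '' G)) ∧
      volume (⋃ n : ℤ, (fun s => (2 : ℝ) ^ n * s) '' G)ᶜ = 0) ↔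
    (∃ G' : Set ℝ, MeasurableSet G' ∧ volume (symmDiff G G') = 0 ∧
      DilationCongruent G' (Set.Ico (-(2 * π)) (-π) ∪ Set.Ico π (2 * π))) := by
  change IsDilationGenerator G ↔
    ∃ G', MeasurableSet G' ∧ volume (symmDiff G G') = 0 ∧ DilationCongruent G' (dyadicShell π)
  simp only [measure_symmDiff_eq_zero_iff, dilationCongruent_dyadicShell_iff pi_pos]
  constructor
  · exact IsDilationGenerator.exists_bijOn_ae_eq pi_pos hG
  · rintro ⟨G', -, hGG', hbij⟩
    exact (isDilationGenerator_of_bijOn pi_pos hbij).congr hGG'.symm
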